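/- arXiv:1702.06488 — 2 statements merged into one kernel-verified Lean document; each statement's English description precedes it below -/
import Mathlib

section
/- Let U, V ∈ ℝ^{d×K} have orthonormal columns, let P_U = UUᵀ and P_V = VVᵀ, and let H = VᵀU with matrix sign function Ĥ = sgn(H). If ‖P_U − P_V‖₂ < 1, then Ĥ is orthonormal and ‖VĤ − U‖_F² = 2‖H − Ĥ‖_*, where ‖·‖_* is the nuclear norm. -/
open Matrix BigOperators

/-- Squared Frobenius norm of a real matrix. -/
noncomputable def frobSq {m n : Type*} [Fintype m] [Fintype n] (A : Matrix m n ℝ) : ℝ :=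
  ∑ i, ∑ j, (A i j) ^ 2

/-- Spectral norm (ℓ² operator norm) of a real matrix. -/
noncomputable def specNorm {m n : Type*} [Fintype m] [Fintype n] [DecidableEq n]
    (A : Matrix m n ℝ) : ℝ :=
  ‖LinearMap.toContinuousLinearMap (Matrix.toEuclideanLin A)‖

/-!
Write `H = VᵀU = P diag(σ) Qᵀ`. Every `σⱼ` lies in `(0, 1]`. If `σⱼ = 0`, the unit vector
`y = U Q eⱼ` satisfies `Vᵀy = 0`, so `UUᵀ - VVᵀ` fixes `y` and has spectral norm at least `1`;
and `σⱼ² = ‖Vᵀy‖² ≤ ‖y‖² = 1` by Bessel's inequality. Hence `Ĥ = PQᵀ` is orthogonal, `VĤ` has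
orthonormal columns, and expanding the Frobenius norm gives
`‖VĤ - U‖_F² = 2K - 2 tr(ĤᵀVᵀU) = 2K - 2 ∑ⱼ σⱼ = 2 ∑ⱼ |σⱼ - 1|`.
-/

section

variable {m n : Type*} [Fintype m] [Fintype n]

lemma frobSq_eq_trace (A : Matrix m n ℝ) : frobSq A = trace (Aᵀ * A) := by
  simp only [frobSq, trace, diag, mul_apply, transpose_apply, sq]
  exact Finset.sum_comm

lemma frobSq_sub_of_transpose_mul_self_eq_one [DecidableEq n] {A B : Matrix m n ℝ}
    (hA : Aᵀ * A = 1) (hB : Bᵀ * B = 1) :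
    frobSq (A - B) = 2 * (Fintype.card n - trace (Aᵀ * B)) := by
  have hBA : trace (Bᵀ * A) = trace (Aᵀ * B) := by
    rw [← trace_transpose, transpose_mul, transpose_transpose]
  rw [frobSq_eq_trace, transpose_sub, Matrix.sub_mul, Matrix.mul_sub, Matrix.mul_sub, hA, hB,
    trace_sub, trace_sub, trace_sub, hBA, trace_one]
  ring

lemma Matrix.transpose_mul_self_mul_eq_one {l : Type*} [Fintype l] [DecidableEq n]
    [DecidableEq l] {A : Matrix m n ℝ} {B : Matrix n l ℝ} (hA : Aᵀ * A = 1) (hB : Bᵀ * B = 1) :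
    (A * B)ᵀ * (A * B) = 1 := by
  rw [transpose_mul, Matrix.mul_assoc, ← Matrix.mul_assoc Aᵀ, hA, Matrix.one_mul, hB]

lemma Matrix.dotProduct_mulVec_self_of_transpose_mul_self_eq_one [DecidableEq n]
    {A : Matrix m n ℝ} (hA : Aᵀ * A = 1) (x : n → ℝ) : (A *ᵥ x) ⬝ᵥ (A *ᵥ x) = x ⬝ᵥ x := by
  rw [dotProduct_mulVec, vecMul_mulVec, hA, vecMul_one]

lemma Matrix.dotProduct_transpose_mulVec_self_le [DecidableEq n] {A : Matrix m n ℝ}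
    (hA : Aᵀ * A = 1) (y : m → ℝ) : (Aᵀ *ᵥ y) ⬝ᵥ (Aᵀ *ᵥ y) ≤ y ⬝ᵥ y := by
  set z := A *ᵥ (Aᵀ *ᵥ y)
  have hzz : z ⬝ᵥ z = (Aᵀ *ᵥ y) ⬝ᵥ (Aᵀ *ᵥ y) :=
    Matrix.dotProduct_mulVec_self_of_transpose_mul_self_eq_one hA _
  have hyz : y ⬝ᵥ z = (Aᵀ *ᵥ y) ⬝ᵥ (Aᵀ *ᵥ y) := by
    rw [dotProduct_mulVec, ← mulVec_transpose, dotProduct_comm]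
  have hres : 0 ≤ (y - z) ⬝ᵥ (y - z) := Finset.sum_nonneg fun i _ => mul_self_nonneg _
  rw [sub_dotProduct, dotProduct_sub, dotProduct_sub, dotProduct_comm z y, hzz, hyz] at hres
  linarith

lemma one_le_specNorm_of_mulVec_eq_self [DecidableEq n] {A : Matrix n n ℝ} {x : n → ℝ}
    (hx : x ≠ 0) (hAx : A *ᵥ x = x) : 1 ≤ specNorm A := by
  have h := (LinearMap.toContinuousLinearMap (toEuclideanLin A)).le_opNorm (WithLp.toLp 2 x)
  rw [LinearMap.coe_toContinuousLinearMap', toLpLin_toLp, toLin'_apply, hAx] at h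
  have hpos : 0 < ‖WithLp.toLp 2 x‖ := norm_pos_iff.mpr (by simpa using hx)
  exact (le_mul_iff_one_le_left hpos).mp (by simpa [specNorm] using h)

end

section

variable {m n : Type*} [Fintype m] [Fintype n] [DecidableEq n]

lemma Matrix.svd_mulVec_right_singular_vector {P Q : Matrix n n ℝ} (hQ : Qᵀ * Q = 1) (σ : n → ℝ)
    (j : n) :
    (P * diagonal σ * Qᵀ) *ᵥ (Q *ᵥ Pi.single j 1) = σ j • (P *ᵥ Pi.single j 1) := by
  rw [mulVec_mulVec, Matrix.mul_assoc, hQ, Matrix.mul_one, ← mulVec_mulVec,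
    diagonal_mulVec_single, ← smul_eq_mul, Pi.single_smul', mulVec_smul]

lemma Matrix.dotProduct_mulVec_single_self {Q : Matrix n n ℝ} (hQ : Qᵀ * Q = 1) (j : n) :
    (Q *ᵥ Pi.single j 1) ⬝ᵥ (Q *ᵥ Pi.single j 1) = 1 := by
  rw [dotProduct_mulVec_self_of_transpose_mul_self_eq_one hQ]
  simp

lemma Matrix.trace_transpose_mul_svd {P Q : Matrix n n ℝ} (hP : Pᵀ * P = 1) (hQ : Qᵀ * Q = 1)
    (σ : n → ℝ) : trace ((P * Qᵀ)ᵀ * (P * diagonal σ * Qᵀ)) = ∑ j, σ j := by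
  rw [transpose_mul, transpose_transpose, Matrix.mul_assoc, ← Matrix.mul_assoc Pᵀ,
    ← Matrix.mul_assoc Pᵀ, hP, Matrix.one_mul, trace_mul_comm, Matrix.mul_assoc, hQ,
    Matrix.mul_one, trace_diagonal]

variable {U V : Matrix m n ℝ} {P Q : Matrix n n ℝ} {σ : n → ℝ}

lemma singular_value_ne_zero_of_specNorm_lt_one [DecidableEq m] (hU : Uᵀ * U = 1)
    (hQ : Qᵀ * Q = 1) (hSVD : Vᵀ * U = P * diagonal σ * Qᵀ)
    (hlt : specNorm (U * Uᵀ - V * Vᵀ) < 1) (j : n) : σ j ≠ 0 := by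
  intro hσj
  set q := Q *ᵥ Pi.single j 1
  have hVy : Vᵀ *ᵥ (U *ᵥ q) = 0 := by
    rw [mulVec_mulVec, hSVD, svd_mulVec_right_singular_vector hQ, hσj, zero_smul]
  have hfix : (U * Uᵀ - V * Vᵀ) *ᵥ (U *ᵥ q) = U *ᵥ q := by
    rw [sub_mulVec, ← mulVec_mulVec, ← mulVec_mulVec, hVy, mulVec_zero, sub_zero,
      mulVec_mulVec (M := Uᵀ), hU, one_mulVec]
  have hy : U *ᵥ q ≠ 0 := by
    intro h0
    have h1 := dotProduct_mulVec_single_self hQ j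
    rw [← dotProduct_mulVec_self_of_transpose_mul_self_eq_one hU, h0, zero_dotProduct] at h1
    exact zero_ne_one h1
  exact (one_le_specNorm_of_mulVec_eq_self hy hfix).not_gt hlt

lemma abs_singular_value_le_one (hU : Uᵀ * U = 1) (hV : Vᵀ * V = 1) (hP : Pᵀ * P = 1)
    (hQ : Qᵀ * Q = 1) (hSVD : Vᵀ * U = P * diagonal σ * Qᵀ) (j : n) : |σ j| ≤ 1 := by
  set y := U *ᵥ (Q *ᵥ Pi.single j 1)
  have hVy : Vᵀ *ᵥ y = σ j • (P *ᵥ Pi.single j 1) := by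
    rw [mulVec_mulVec, hSVD, svd_mulVec_right_singular_vector hQ]
  have hbessel := dotProduct_transpose_mulVec_self_le hV y
  rw [hVy, smul_dotProduct, dotProduct_smul, dotProduct_mulVec_single_self hP,
    dotProduct_mulVec_self_of_transpose_mul_self_eq_one hU, dotProduct_mulVec_single_self hQ,
    smul_eq_mul, smul_eq_mul, mul_one] at hbessel
  exact (sq_le_one_iff_abs_le_one _).mp (by rwa [sq])

end

/-- Let `U, V` have orthonormal columns, `H = VᵀU` with SVD `H = P diag(σ) Qᵀ`, and let
`Ĥ = sgn(H) = P diag(1_{σⱼ>0}) Qᵀ` be the matrix sign of `H`.  If `‖UUᵀ − VVᵀ‖₂ < 1`,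
then `Ĥ` is orthonormal and `‖VĤ − U‖_F² = 2‖H − Ĥ‖_*`, where the nuclear norm of
`H − Ĥ = P diag(σⱼ − 1_{σⱼ>0}) Qᵀ` equals `∑ⱼ |σⱼ − 1_{σⱼ>0}|`. -/
theorem matrix_sign_alignment {d K : ℕ} (U V : Matrix (Fin d) (Fin K) ℝ)
    (hU : Uᵀ * U = 1) (hV : Vᵀ * V = 1)
    (P Q : Matrix (Fin K) (Fin K) ℝ) (σ : Fin K → ℝ)
    (hP : Pᵀ * P = 1) (hQ : Qᵀ * Q = 1) (hσ0 : ∀ j, 0 ≤ σ j)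
    (hSVD : Vᵀ * U = P * Matrix.diagonal σ * Qᵀ)
    (Hhat : Matrix (Fin K) (Fin K) ℝ)
    (hHhat : Hhat = P * Matrix.diagonal (fun j => if 0 < σ j then (1 : ℝ) else 0) * Qᵀ)
    (hlt : specNorm (U * Uᵀ - V * Vᵀ) < 1) :
    Hhatᵀ * Hhat = 1 ∧
    frobSq (V * Hhat - U) = 2 * ∑ j, |σ j - (if 0 < σ j then (1 : ℝ) else 0)| := by
  have hpos (j : Fin K) : 0 < σ j :=
    (hσ0 j).lt_of_ne' (singular_value_ne_zero_of_specNorm_lt_one hU hQ hSVD hlt j)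
  have hHhat_eq : Hhat = P * Qᵀ := by
    simp only [hHhat, hpos, if_true, diagonal_one, Matrix.mul_one]
  have hQt : Qᵀᵀ * Qᵀ = 1 := by rw [transpose_transpose]; exact mul_eq_one_comm.mp hQ
  have hHhat_orth : Hhatᵀ * Hhat = 1 := hHhat_eq ▸ transpose_mul_self_mul_eq_one hP hQt
  refine ⟨hHhat_orth, ?_⟩
  have hsign (j : Fin K) : |σ j - if 0 < σ j then 1 else 0| = 1 - σ j := by
    have hle : σ j ≤ 1 := (le_abs_self _).trans (abs_singular_value_le_one hU hV hP hQ hSVD j)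
    rw [if_pos (hpos j), abs_sub_comm, abs_of_nonneg (sub_nonneg.mpr hle)]
  rw [frobSq_sub_of_transpose_mul_self_eq_one (transpose_mul_self_mul_eq_one hV hHhat_orth) hU,
    transpose_mul, Matrix.mul_assoc, hSVD, hHhat_eq, trace_transpose_mul_svd hP hQ]
  simp only [hsign, Finset.sum_sub_distrib, Finset.sum_const, Finset.card_univ, nsmul_eq_mul,
    mul_one]
end

section
/- Let U, V ∈ ℝ^{d×K} have orthonormal columns, H = VᵀU, Ĥ = sgn(H). If ε := ‖UUᵀ − VVᵀ‖₂ < 1, then ‖H − Ĥ‖₂ ≤ ε²/(2 − ε²). -/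
/-!
Write `H = VᵀU`. Because `U` and `V` have orthonormal columns, the columns of
`(UUᵀ - VVᵀ) U = U - V H` have Gram matrix `1 - HᵀH`, so `‖1 - HᵀH‖ ≤ ε²`; conjugating by the
right singular vectors shows `|1 - σⱼ²| ≤ ε² < 1` for every singular value. Hence all `σⱼ` are
positive, `sgn H = PQᵀ` and `H - sgn H = P diag(σ - 1) Qᵀ`, whose norm is at most
`maxⱼ |σⱼ - 1|`. Finally `|1 - σ²| ≤ t < 1` forces `|σ - 1| ≤ t / (2 - t)`.
-/

open Matrix BigOperators

open scoped Matrix.Norms.L2Operator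

lemma specNorm_eq_l2_opNorm {m n : Type*} [Fintype m] [Fintype n] [DecidableEq n]
    (A : Matrix m n ℝ) : specNorm A = ‖A‖ := rfl

lemma pos_of_abs_one_sub_sq_le {s t : ℝ} (hs : 0 ≤ s) (ht : t < 1) (h : |1 - s ^ 2| ≤ t) :
    0 < s := by
  refine lt_of_le_of_ne hs fun hs0 => ?_
  rw [← hs0] at h
  norm_num at h
  linarith

lemma abs_sub_one_le_of_abs_one_sub_sq_le {s t : ℝ} (hs : 0 ≤ s) (ht : t < 1)
    (h : |1 - s ^ 2| ≤ t) : |s - 1| ≤ t / (2 - t) := by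
  obtain ⟨hlo, hhi⟩ := abs_le.mp h
  have ht0 : 0 ≤ t := (abs_nonneg _).trans h
  have h2t : 0 < 2 - t := by linarith
  rw [abs_le, ← neg_div, div_le_iff₀ h2t, le_div_iff₀ h2t]
  constructor
  · -- `s ≥ 1 - t` because `s² ≥ 1 - t ≥ (1 - t)²`
    have : 1 - t ≤ s := by nlinarith
    nlinarith
  · rcases le_or_gt s 1 with hs1 | hs1
    · nlinarith
    · nlinarith [mul_le_mul_of_nonneg_left ht0 (sub_pos.mpr hs1).le]

namespace Matrix

variable {m n k l : Type*} [Fintype m] [Fintype n] [Fintype k] [Fintype l]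

lemma l2_opNorm_transpose [DecidableEq m] [DecidableEq n] (A : Matrix m n ℝ) : ‖Aᵀ‖ = ‖A‖ := by
  rw [← conjTranspose_eq_transpose_of_trivial, l2_opNorm_conjTranspose]

lemma l2_opNorm_le_one_of_transpose_mul_self_eq_one [DecidableEq n] {A : Matrix m n ℝ}
    (hA : Aᵀ * A = 1) : ‖A‖ ≤ 1 := by
  have hsq : ‖A‖ * ‖A‖ ≤ 1 := by
    rw [← l2_opNorm_conjTranspose_mul_self, conjTranspose_eq_transpose_of_trivial, hA,
      ← diagonal_one, l2_opNorm_diagonal]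
    exact pi_norm_le_iff_of_nonneg zero_le_one |>.mpr fun _ => by simp
  nlinarith [norm_nonneg A]

lemma l2_opNorm_transpose_le_one_of_transpose_mul_self_eq_one [DecidableEq m] [DecidableEq n]
    {A : Matrix m n ℝ} (hA : Aᵀ * A = 1) : ‖Aᵀ‖ ≤ 1 :=
  (l2_opNorm_transpose A).trans_le (l2_opNorm_le_one_of_transpose_mul_self_eq_one hA)

lemma l2_opNorm_mul_mul_le [DecidableEq m] [DecidableEq n] [DecidableEq k] {A : Matrix l m ℝ}
    {B : Matrix n k ℝ} (hA : ‖A‖ ≤ 1) (hB : ‖B‖ ≤ 1) (M : Matrix m n ℝ) : ‖A * M * B‖ ≤ ‖M‖ :=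
  calc ‖A * M * B‖ ≤ ‖A‖ * ‖M‖ * ‖B‖ := by
        grw [l2_opNorm_mul, l2_opNorm_mul]
    _ ≤ 1 * ‖M‖ * 1 := by gcongr
    _ = ‖M‖ := by ring

lemma abs_le_l2_opNorm_diagonal [DecidableEq n] (v : n → ℝ) (j : n) : |v j| ≤ ‖diagonal v‖ := by
  rw [l2_opNorm_diagonal]
  exact norm_le_pi_norm v j

lemma transpose_mul_self_proj_sub_proj_mul [DecidableEq n] [DecidableEq k] {U : Matrix m n ℝ}
    {V : Matrix m k ℝ} (hU : Uᵀ * U = 1) (hV : Vᵀ * V = 1) :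
    ((U * Uᵀ - V * Vᵀ) * U)ᵀ * ((U * Uᵀ - V * Vᵀ) * U) = 1 - (Vᵀ * U)ᵀ * (Vᵀ * U) := by
  have hW : (U * Uᵀ - V * Vᵀ) * U = U - V * (Vᵀ * U) := by
    rw [Matrix.sub_mul, Matrix.mul_assoc, hU, Matrix.mul_one, Matrix.mul_assoc]
  simp only [hW, transpose_sub, transpose_mul, transpose_transpose, Matrix.sub_mul,
    Matrix.mul_sub, Matrix.mul_assoc, hU]
  rw [← Matrix.mul_assoc Vᵀ V, hV, Matrix.one_mul]
  abel

lemma l2_opNorm_one_sub_transpose_mul_self_le [DecidableEq m] [DecidableEq n] [DecidableEq k]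
    {U : Matrix m n ℝ} {V : Matrix m k ℝ} (hU : Uᵀ * U = 1) (hV : Vᵀ * V = 1) :
    ‖1 - (Vᵀ * U)ᵀ * (Vᵀ * U)‖ ≤ ‖U * Uᵀ - V * Vᵀ‖ ^ 2 := by
  have hW : ‖(U * Uᵀ - V * Vᵀ) * U‖ ≤ ‖U * Uᵀ - V * Vᵀ‖ :=
    (l2_opNorm_mul _ _).trans <| mul_le_of_le_one_right (norm_nonneg _)
      (l2_opNorm_le_one_of_transpose_mul_self_eq_one hU)
  rw [← transpose_mul_self_proj_sub_proj_mul hU hV, ← conjTranspose_eq_transpose_of_trivial,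
    l2_opNorm_conjTranspose_mul_self, sq]
  exact mul_self_le_mul_self (norm_nonneg _) hW

lemma abs_one_sub_sq_le_of_svd [DecidableEq m] [DecidableEq n] [DecidableEq k] [DecidableEq l]
    {U : Matrix m n ℝ} {V : Matrix m k ℝ} (hU : Uᵀ * U = 1) (hV : Vᵀ * V = 1)
    {P : Matrix k l ℝ} {Q : Matrix n l ℝ} {σ : l → ℝ} (hP : Pᵀ * P = 1) (hQ : Qᵀ * Q = 1)
    (hSVD : Vᵀ * U = P * diagonal σ * Qᵀ) (j : l) :
    |1 - σ j ^ 2| ≤ ‖U * Uᵀ - V * Vᵀ‖ ^ 2 := by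
  have hconj : Qᵀ * (1 - (Vᵀ * U)ᵀ * (Vᵀ * U)) * Q = diagonal (fun i => 1 - σ i ^ 2) := by
    simp only [hSVD, transpose_mul, transpose_transpose, diagonal_transpose, Matrix.mul_sub,
      Matrix.sub_mul, Matrix.mul_one, Matrix.mul_assoc, hQ]
    simp only [← Matrix.mul_assoc, hQ, Matrix.one_mul]
    simp only [Matrix.mul_assoc, hP, Matrix.mul_one]
    rw [diagonal_mul_diagonal, ← diagonal_one, diagonal_sub]
    simp [sq]
  calc |1 - σ j ^ 2| ≤ ‖diagonal (fun i => 1 - σ i ^ 2)‖ :=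
        abs_le_l2_opNorm_diagonal (fun i => 1 - σ i ^ 2) j
    _ ≤ ‖1 - (Vᵀ * U)ᵀ * (Vᵀ * U)‖ :=
        hconj ▸ l2_opNorm_mul_mul_le (l2_opNorm_transpose_le_one_of_transpose_mul_self_eq_one hQ)
          (l2_opNorm_le_one_of_transpose_mul_self_eq_one hQ) _
    _ ≤ ‖U * Uᵀ - V * Vᵀ‖ ^ 2 := l2_opNorm_one_sub_transpose_mul_self_le hU hV

end Matrix

/-- Let `U, V ∈ ℝ^{d×K}` have orthonormal columns, `H = VᵀU` with SVD
`H = P diag(σ) Qᵀ`, and `Ĥ = sgn(H)`.  If `ε := ‖UUᵀ − VVᵀ‖₂ < 1`, then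
`‖H − Ĥ‖₂ ≤ ε²/(2 − ε²)`. -/
theorem specNorm_H_sub_sign_le {d K : ℕ} (U V : Matrix (Fin d) (Fin K) ℝ)
    (hU : Uᵀ * U = 1) (hV : Vᵀ * V = 1)
    (P Q : Matrix (Fin K) (Fin K) ℝ) (σ : Fin K → ℝ)
    (hP : Pᵀ * P = 1) (hQ : Qᵀ * Q = 1) (hσ0 : ∀ j, 0 ≤ σ j)
    (hSVD : Vᵀ * U = P * Matrix.diagonal σ * Qᵀ)
    (Hhat : Matrix (Fin K) (Fin K) ℝ)
    (hHhat : Hhat = P * Matrix.diagonal (fun j => if 0 < σ j then (1 : ℝ) else 0) * Qᵀ)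
    (ε : ℝ) (hε : ε = specNorm (U * Uᵀ - V * Vᵀ)) (hlt : ε < 1) :
    specNorm (Vᵀ * U - Hhat) ≤ ε ^ 2 / (2 - ε ^ 2) := by
  rw [specNorm_eq_l2_opNorm] at hε ⊢
  have hgap (j : Fin K) : |1 - σ j ^ 2| ≤ ε ^ 2 :=
    hε ▸ abs_one_sub_sq_le_of_svd hU hV hP hQ hSVD j
  have hε2 : ε ^ 2 < 1 := by nlinarith [hε ▸ norm_nonneg (U * Uᵀ - V * Vᵀ)]
  have hdiff : Vᵀ * U - Hhat = P * diagonal (fun j => σ j - 1) * Qᵀ := by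
    have hsign : (fun j => if 0 < σ j then (1 : ℝ) else 0) = fun _ => 1 :=
      funext fun j => if_pos (pos_of_abs_one_sub_sq_le (hσ0 j) hε2 (hgap j))
    rw [hSVD, hHhat, hsign, ← Matrix.sub_mul, ← Matrix.mul_sub, ← diagonal_sub]
  rw [hdiff]
  refine (l2_opNorm_mul_mul_le (l2_opNorm_le_one_of_transpose_mul_self_eq_one hP)
    (l2_opNorm_transpose_le_one_of_transpose_mul_self_eq_one hQ) _).trans ?_
  rw [l2_opNorm_diagonal]
  refine pi_norm_le_iff_of_nonneg (div_nonneg (sq_nonneg ε) (by linarith)) |>.mpr fun j => ?_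
  exact abs_sub_one_le_of_abs_one_sub_sq_le (hσ0 j) hε2 (hgap j)
end
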